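/- arXiv:1207.3947 — 5 statements merged into one kernel-verified Lean document; each statement's English description precedes it below -/
import Mathlib

section
/- The assignment Y_i ↦ Y_i^{−1} (i = 1,…,n−1) extends to an involutive R-algebra automorphism ω of the presented algebra 𝔄. -/
/-- The integers `α^{(m)}_{k,l,l'}`, defined by the recursion
`α^{(0)}_{k,l,l'} = δ_{k,0}δ_{l,0}δ_{l',0}`,
`α^{(m+1)}_{k,l,l'} = α^{(m)}_{k-1,l',l} + α^{(m)}_{-k,l',l-1}`, with `α^{(m)}_{k,l,l'} = 0`
whenever `l < 0` or `l' < 0`. -/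
def alternatingAlpha : ℕ → ℤ → ℤ → ℤ → ℤ
  | 0, k, l, l' => if k = 0 ∧ l = 0 ∧ l' = 0 then 1 else 0
  | m + 1, k, l, l' =>
      if l < 0 ∨ l' < 0 then 0
      else alternatingAlpha m (k - 1) l' l + alternatingAlpha m (-k) l' (l - 1)

/-- The coefficient `a_k^{(m)}(β,β') = Σ_{l,l'≥0} β^l β'^{l'} (α^{(m)}_{k,l,l'} − α^{(m)}_{−k,l',l})`
(a finite sum). -/
noncomputable def aCoeff (R : Type*) [CommRing R] (m k : ℕ) (b b' : R) : R :=
  ∑ᶠ (l : ℕ) (l' : ℕ), b ^ l * b' ^ l' *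
    ((alternatingAlpha m (k : ℤ) (l : ℤ) (l' : ℤ) -
      alternatingAlpha m (-(k : ℤ)) (l' : ℤ) (l : ℤ) : ℤ) : R)

section Hecke
variable (n : ℕ) (M : CoxeterMatrix (Fin n)) (R : Type*) [CommRing R] (q : Fin n → Rˣ)

/-- The scalar `q_i - q_i⁻¹`. -/
def heckeC (i : Fin n) : R := (q i : R) - ((q i)⁻¹ : Rˣ)

/-- The scalar `β_i = (q_i - q_i⁻¹)(q_i + q_i⁻¹)⁻¹`. -/
noncomputable def heckeBeta (i : Fin n) : R :=
  heckeC n R q i * Ring.inverse ((q i : R) + ((q i)⁻¹ : Rˣ))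

variable [NeZero n]

/-- Generators of the presented algebra `𝔄`: for each `i ≠ 0` a generator `Y_i = (i, true)`
and a generator `Y_i⁻¹ = (i, false)`. -/
abbrev AltGen : Type _ := {i : Fin n // i ≠ 0} × Bool

/-- The defining relations of the presented algebra `𝔄` (Bourbaki presentation of the
alternating subalgebra): `Y_i Y_i⁻¹ = Y_i⁻¹ Y_i = 1`;
`Σ_k a_k^{(m_{0i})}(β_0,β_i)·(Y_i^{(m_{0i}+k)/2} − Y_i^{(m_{0i}−k)/2}) = 0` for `m_{0i}` finite;
and `Σ_k a_k^{(m_{ij})}(β_i,β_j)·((Y_i⁻¹Y_j)^{(m_{ij}+k)/2} − (Y_i⁻¹Y_j)^{(m_{ij}−k)/2}) = 0`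
for `i < j` with `m_{ij}` finite (sums over `1 ≤ k ≤ m`, `k ≡ m (mod 2)`;
the matrix entry `0` encodes `∞`, the relation being omitted). -/
inductive AltRel : FreeAlgebra R (AltGen n) → FreeAlgebra R (AltGen n) → Prop
  | inv_right (i : {i : Fin n // i ≠ 0}) :
      AltRel (FreeAlgebra.ι R (i, true) * FreeAlgebra.ι R (i, false)) 1
  | inv_left (i : {i : Fin n // i ≠ 0}) :
      AltRel (FreeAlgebra.ι R (i, false) * FreeAlgebra.ι R (i, true)) 1
  | rel_zero (i : {i : Fin n // i ≠ 0}) (h : M 0 i ≠ 0) :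
      AltRel (∑ k ∈ (Finset.Icc 1 (M 0 i)).filter (fun k => k % 2 = M 0 i % 2),
        aCoeff R (M 0 i) k (heckeBeta n R q 0) (heckeBeta n R q i) •
          ((FreeAlgebra.ι R (i, true)) ^ ((M 0 i + k) / 2) -
           (FreeAlgebra.ι R (i, true)) ^ ((M 0 i - k) / 2))) 0
  | rel_pair (i j : {i : Fin n // i ≠ 0}) (hij : (i : Fin n) < j) (h : M i j ≠ 0) :
      AltRel (∑ k ∈ (Finset.Icc 1 (M i j)).filter (fun k => k % 2 = M i j % 2),
        aCoeff R (M i j) k (heckeBeta n R q i) (heckeBeta n R q j) •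
          ((FreeAlgebra.ι R (i, false) * FreeAlgebra.ι R (j, true)) ^ ((M i j + k) / 2) -
           (FreeAlgebra.ι R (i, false) * FreeAlgebra.ι R (j, true)) ^ ((M i j - k) / 2))) 0

/-- The presented algebra `𝔄` (the Bourbaki presentation of the alternating subalgebra). -/
abbrev AltAlgebra : Type _ := RingQuot (AltRel n M R q)

end Hecke

/-!
Every defining relator of `𝔄` other than `Y_i Y_i⁻¹ = 1` has the shape
`P(y) = Σ_k c_k (y^{(m+k)/2} - y^{(m-k)/2})` with `y` a unit, and such a `P` is
anti-palindromic: `P(y⁻¹) = -y^{-m} P(y)`, whatever the coefficients `c_k`. Hence `P(y) = 0`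
forces `P(y⁻¹) = 0`. The assignment `Y_i ↦ Y_i⁻¹` sends `Y_i` to `Y_i⁻¹` and `Y_i⁻¹ Y_j` to
`Y_i Y_j⁻¹ = Y_i (Y_i⁻¹ Y_j)⁻¹ Y_i⁻¹`, a conjugate of an inverse, so it respects all relations;
it is an involution because it is one on generators.
-/

section RelatorSum

variable {R A : Type*} [CommRing R] [Ring A] [Algebra R A]

def relatorSum (m : ℕ) (c : ℕ → R) (y : A) : A :=
  ∑ k ∈ (Finset.Icc 1 m).filter (fun k => k % 2 = m % 2),
    c k • (y ^ ((m + k) / 2) - y ^ ((m - k) / 2))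

lemma map_relatorSum {B : Type*} [Ring B] [Algebra R B] (f : A →ₐ[R] B) (m : ℕ) (c : ℕ → R)
    (y : A) : f (relatorSum m c y) = relatorSum m c (f y) := by
  simp only [relatorSum, map_sum, map_smul, map_sub, map_pow]

lemma Units.inv_pow_mul_pow {M : Type*} [Monoid M] (u : Mˣ) {m a : ℕ} (h : a ≤ m) :
    (↑u⁻¹ : M) ^ m * (u : M) ^ a = (↑u⁻¹ : M) ^ (m - a) := by
  rw [← Units.val_pow_eq_pow_val, ← Units.val_pow_eq_pow_val, ← Units.val_mul,
    ← Units.val_pow_eq_pow_val, inv_pow_sub u h, inv_pow]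

lemma relatorSum_inv (u : Aˣ) (m : ℕ) (c : ℕ → R) :
    relatorSum m c (↑u⁻¹ : A) = -((↑u⁻¹ : A) ^ m * relatorSum m c (u : A)) := by
  rw [relatorSum, relatorSum, Finset.mul_sum, ← Finset.sum_neg_distrib]
  refine Finset.sum_congr rfl fun k hk => ?_
  obtain ⟨⟨hk1, hkm⟩, hpar⟩ : (1 ≤ k ∧ k ≤ m) ∧ k % 2 = m % 2 := by simpa using hk
  rw [mul_smul_comm, mul_sub, u.inv_pow_mul_pow (by omega), u.inv_pow_mul_pow (by omega),
    ← smul_neg, neg_sub]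
  congr 3 <;> omega

lemma relatorSum_inv_eq_zero {u : Aˣ} {m : ℕ} {c : ℕ → R} (h : relatorSum m c (u : A) = 0) :
    relatorSum m c (↑u⁻¹ : A) = 0 := by
  rw [relatorSum_inv, h, mul_zero, neg_zero]

lemma relatorSum_conj (g : Aˣ) (m : ℕ) (c : ℕ → R) (x : A) :
    relatorSum m c (↑g * x * ↑g⁻¹) = ↑g * relatorSum m c x * ↑g⁻¹ := by
  simp only [relatorSum, Units.conj_pow, Finset.mul_sum, Finset.sum_mul, mul_sub, sub_mul,
    mul_smul_comm, smul_mul_assoc]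

end RelatorSum

section Omega

variable (n : ℕ) [NeZero n] (M : CoxeterMatrix (Fin n)) (R : Type*) [CommRing R]
  (q : Fin n → Rˣ)

local notation "mk" => RingQuot.mkAlgHom R (AltRel n M R q)

def altY (i : {i : Fin n // i ≠ 0}) : (AltAlgebra n M R q)ˣ where
  val := mk (FreeAlgebra.ι R (i, true))
  inv := mk (FreeAlgebra.ι R (i, false))
  val_inv := by rw [← map_mul, RingQuot.mkAlgHom_rel R (AltRel.inv_right i), map_one]
  inv_val := by rw [← map_mul, RingQuot.mkAlgHom_rel R (AltRel.inv_left i), map_one]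

variable {n M R q}

lemma relatorSum_altY_eq_zero {i : {i : Fin n // i ≠ 0}} (h : M 0 i ≠ 0) :
    relatorSum (M 0 i) (fun k => aCoeff R (M 0 i) k (heckeBeta n R q 0) (heckeBeta n R q i))
      (altY n M R q i : AltAlgebra n M R q) = 0 := by
  rw [← map_zero mk, ← RingQuot.mkAlgHom_rel R (AltRel.rel_zero i h)]
  exact (map_relatorSum _ _ _ _).symm

lemma relatorSum_altY_inv_mul_eq_zero {i j : {i : Fin n // i ≠ 0}} (hij : (i : Fin n) < j)
    (h : M i j ≠ 0) :
    relatorSum (M i j) (fun k => aCoeff R (M i j) k (heckeBeta n R q i) (heckeBeta n R q j))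
      (↑((altY n M R q i)⁻¹ * altY n M R q j) : AltAlgebra n M R q) = 0 := by
  rw [← map_zero mk, ← RingQuot.mkAlgHom_rel R (AltRel.rel_pair i j hij h), ← relatorSum,
    map_relatorSum, map_mul]
  rfl

variable (n M R q)

noncomputable def altFlipHom : FreeAlgebra R (AltGen n) →ₐ[R] AltAlgebra n M R q :=
  FreeAlgebra.lift R fun g => mk (FreeAlgebra.ι R (g.1, !g.2))

lemma altFlipHom_ι (g : AltGen n) :
    altFlipHom n M R q (FreeAlgebra.ι R g) = mk (FreeAlgebra.ι R (g.1, !g.2)) :=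
  FreeAlgebra.lift_ι_apply _ _

lemma altFlipHom_rel ⦃x y : FreeAlgebra R (AltGen n)⦄ (hxy : AltRel n M R q x y) :
    altFlipHom n M R q x = altFlipHom n M R q y := by
  induction hxy with
  | inv_right i =>
    rw [map_mul, map_one, altFlipHom_ι, altFlipHom_ι]
    exact (altY n M R q i).inv_val
  | inv_left i =>
    rw [map_mul, map_one, altFlipHom_ι, altFlipHom_ι]
    exact (altY n M R q i).val_inv
  | rel_zero i h =>
    rw [map_zero, ← relatorSum, map_relatorSum, altFlipHom_ι]
    exact relatorSum_inv_eq_zero (relatorSum_altY_eq_zero h)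
  | rel_pair i j hij h =>
    rw [map_zero, ← relatorSum, map_relatorSum, map_mul, altFlipHom_ι, altFlipHom_ι]
    set Y := altY n M R q
    have hconj : mk (FreeAlgebra.ι R (i, true)) * mk (FreeAlgebra.ι R (j, false)) =
        ↑(Y i) * ↑((Y i)⁻¹ * Y j)⁻¹ * ↑(Y i)⁻¹ := by
      change ((Y i * (Y j)⁻¹ : (AltAlgebra n M R q)ˣ) : AltAlgebra n M R q) = _
      rw [← Units.val_mul, ← Units.val_mul]
      group
    rw [Bool.not_false, Bool.not_true, hconj, relatorSum_conj,
      relatorSum_inv_eq_zero (relatorSum_altY_inv_mul_eq_zero hij h), mul_zero, zero_mul]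

noncomputable def altOmega : AltAlgebra n M R q →ₐ[R] AltAlgebra n M R q :=
  RingQuot.liftAlgHom R ⟨altFlipHom n M R q, altFlipHom_rel n M R q⟩

lemma altOmega_mk (g : AltGen n) :
    altOmega n M R q (mk (FreeAlgebra.ι R g)) = mk (FreeAlgebra.ι R (g.1, !g.2)) := by
  rw [altOmega, RingQuot.liftAlgHom_mkAlgHom_apply, altFlipHom_ι]

lemma altOmega_comp_self : (altOmega n M R q).comp (altOmega n M R q) = AlgHom.id R _ := by
  refine RingQuot.ringQuot_ext' R _ _ (FreeAlgebra.hom_ext (funext fun g => ?_))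
  simp [altOmega_mk]

end Omega

theorem omega_automorphism_of_alternating_hecke_subalgebra_general
    (n : ℕ) [NeZero n] (M : CoxeterMatrix (Fin n)) (R : Type*) [CommRing R]
    (q : Fin n → Rˣ) :
    ∃ ω : AltAlgebra n M R q ≃ₐ[R] AltAlgebra n M R q,
      (∀ i : {i : Fin n // i ≠ 0},
        ω (RingQuot.mkAlgHom R (AltRel n M R q) (FreeAlgebra.ι R (i, true))) =
          RingQuot.mkAlgHom R (AltRel n M R q) (FreeAlgebra.ι R (i, false))) ∧
      (∀ x : AltAlgebra n M R q, ω (ω x) = x) :=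
  ⟨AlgEquiv.ofAlgHom _ _ (altOmega_comp_self n M R q) (altOmega_comp_self n M R q),
    fun i => altOmega_mk n M R q (i, true),
    fun x => DFunLike.congr_fun (altOmega_comp_self n M R q) x⟩

/-- The assignment `Y_i ↦ Y_i⁻¹` extends to an involutive `R`-algebra automorphism `ω` of
the presented algebra `𝔄`. -/
theorem omega_automorphism_of_alternating_hecke_subalgebra
    (n : ℕ) [NeZero n] (M : CoxeterMatrix (Fin n)) (R : Type*) [CommRing R]
    (q : Fin n → Rˣ)
    (hq : ∀ i, IsUnit ((q i : R) + ((q i)⁻¹ : Rˣ)))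
    (hodd : ∀ i j, M i j % 2 = 1 → q i = q j) :
    ∃ ω : AltAlgebra n M R q ≃ₐ[R] AltAlgebra n M R q,
      (∀ i : {i : Fin n // i ≠ 0},
        ω (RingQuot.mkAlgHom R (AltRel n M R q) (FreeAlgebra.ι R (i, true))) =
          RingQuot.mkAlgHom R (AltRel n M R q) (FreeAlgebra.ι R (i, false))) ∧
      (∀ x : AltAlgebra n M R q, ω (ω x) = x) :=
  omega_automorphism_of_alternating_hecke_subalgebra_general n M R q
end

section
/- Let W∞ be the infinite dihedral group, i.e. the free product of two cyclic groups of order 2, with generators u and v (u² = v² = 1), and let A be the group algebra of W∞ over the polynomial ring ℤ[x,y]. Then for every m ≥ 0, the identity ⟨u + x, v + y⟩_m = Σ_{l,l' ≥ 0} x^l y^{l'} · Σ_{k ∈ ℤ} α^{(m)}_{k,l,l'} ⟨u,v⟩_k holds in A, where ⟨u,v⟩_k ∈ W∞ and all sums have only finitely many nonzero terms. -/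
/-!
Induction on `m`: `⟨u + x, v + y⟩_{m+1} = (u + x) ⟨v + y, u + x⟩_m`. Expand the second factor
by the induction hypothesis (with the roles of `u, x` and `v, y` swapped). Multiplying by `u`
turns `⟨v,u⟩_k` into `⟨u,v⟩_{k+1}` (because `u² = 1`), and multiplying by `x` raises the degree
in `x` by one and turns `⟨v,u⟩_k` into `⟨u,v⟩_{-k}`. After reindexing, these two contributions
are the two terms of the recursion for `α^{(m+1)}`. All sums are finite because `α^{(m)}_{k,l,l'}`
vanishes unless `|k|, l, l' ≤ m`.
-/

/-- `altProd a b k` is the alternating product `a * b * a * b * ⋯` with `k` factors. -/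
def altProd {M : Type*} [Monoid M] (a b : M) : ℕ → M
  | 0 => 1
  | k + 1 => a * altProd b a k

/-- `altProdInt a b k` for `k : ℤ`: `⟨a,b⟩_k` for `k ≥ 0` and `⟨b,a⟩_{-k}` for `k < 0`. -/
def altProdInt {G : Type*} [Monoid G] (a b : G) (k : ℤ) : G :=
  if 0 ≤ k then altProd a b k.toNat else altProd b a (-k).toNat

/-- The infinite dihedral group: the free product of two cyclic groups of order two, with
generators `u = of false` and `v = of true`. -/
def InfDihedral : Type := PresentedGroup ({FreeGroup.of false ^ 2, FreeGroup.of true ^ 2} :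
  Set (FreeGroup Bool))

instance : Group InfDihedral :=
  inferInstanceAs (Group (PresentedGroup _))

/-- The generator `u` of the infinite dihedral group. -/
def dihU : InfDihedral := PresentedGroup.of false

/-- The generator `v` of the infinite dihedral group. -/
def dihV : InfDihedral := PresentedGroup.of true

/-- The group algebra of the infinite dihedral group over `ℤ[x,y]`. -/
abbrev InfDihedralAlgebra : Type := MonoidAlgebra (MvPolynomial (Fin 2) ℤ) InfDihedral

open Function MonoidAlgebra

theorem bounds_of_alternatingAlpha_ne_zero {m : ℕ} {k l l' : ℤ}
    (h : alternatingAlpha m k l l' ≠ 0) :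
    -m ≤ k ∧ k ≤ m ∧ 0 ≤ l ∧ l ≤ m ∧ 0 ≤ l' ∧ l' ≤ m := by
  induction m generalizing k l l' with
  | zero =>
    rw [alternatingAlpha] at h
    split_ifs at h with h₀
    · obtain ⟨rfl, rfl, rfl⟩ := h₀
      simp
    · exact absurd rfl h
  | succ n ih =>
    rw [alternatingAlpha] at h
    split_ifs at h
    · exact absurd rfl h
    · by_cases h₁ : alternatingAlpha n (k - 1) l' l = 0
      · rw [h₁, zero_add] at h
        have := ih h
        omega
      · have := ih h₁
        omega

theorem alternatingAlpha_succ {m : ℕ} {k l l' : ℤ} (hl : 0 ≤ l) (hl' : 0 ≤ l') :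
    alternatingAlpha (m + 1) k l l' =
      alternatingAlpha m (k - 1) l' l + alternatingAlpha m (-k) l' (l - 1) := by
  rw [alternatingAlpha, if_neg (by omega)]

section AltProd

variable {M : Type*} [Monoid M] {a b : M}

theorem altProdInt_natCast (n : ℕ) : altProdInt a b n = altProd a b n := by
  simp [altProdInt]

theorem altProdInt_neg (k : ℤ) : altProdInt a b (-k) = altProdInt b a k := by
  unfold altProdInt
  rcases lt_trichotomy k 0 with h | rfl | h
  · rw [if_pos (by omega), if_neg (by omega)]
  · simp [altProd]
  · rw [if_neg (by omega), if_pos (by omega), neg_neg]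

theorem mul_altProdInt_swap (ha : a * a = 1) (k : ℤ) :
    a * altProdInt b a k = altProdInt a b (k + 1) := by
  obtain ⟨n, rfl | rfl⟩ := Int.eq_nat_or_neg k
  · rw [altProdInt_natCast, ← Nat.cast_succ, altProdInt_natCast, altProd]
  · cases n with
    | zero => simp [altProdInt, altProd]
    | succ n =>
      rw [altProdInt_neg, altProdInt_natCast, altProd, ← mul_assoc, ha, one_mul,
        show -((n + 1 : ℕ) : ℤ) + 1 = -n by push_cast; ring, altProdInt_neg, altProdInt_natCast]

end AltProd

section GroupAlgebra

variable {R G : Type*} [CommRing R] [Monoid G]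

noncomputable def altTerm (a b : G) (x y : R) (c : ℤ → ℤ → ℤ → ℤ) :
    ℕ × ℕ × ℤ → MonoidAlgebra R G
  | (l, l', k) => c k l l' • single (altProdInt a b k) (x ^ l * y ^ l')

variable {a b : G} {x y : R}

theorem hasFiniteSupport_altTerm {c : ℤ → ℤ → ℤ → ℤ} (N : ℕ)
    (hc : ∀ (l l' : ℕ) (k : ℤ), c k l l' ≠ 0 → -N ≤ k ∧ k ≤ N ∧ l ≤ N ∧ l' ≤ N) :
    HasFiniteSupport (altTerm a b x y c) := by
  refine (Finset.range (N + 1) ×ˢ Finset.range (N + 1) ×ˢ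
    Finset.Icc (-N : ℤ) N).finite_toSet.subset ?_
  rintro ⟨l, l', k⟩ h
  have := hc l l' k (left_ne_zero_of_smul h)
  simp only [Finset.coe_product, Set.mem_prod, Finset.coe_range, Set.mem_Iio,
    Finset.coe_Icc, Set.mem_Icc]
  omega

theorem of_mul_altTerm (ha : a * a = 1) (c : ℤ → ℤ → ℤ → ℤ) (l l' : ℕ) (k : ℤ) :
    of R G a * altTerm b a y x c (l, l', k) =
      altTerm a b x y (fun k l l' => c (k - 1) l' l) (l', l, k + 1) := by
  simp only [altTerm, mul_smul_comm, of_apply, single_mul_single, one_mul,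
    mul_altProdInt_swap ha, add_sub_cancel_right, mul_comm (y ^ l)]

theorem algebraMap_mul_altTerm (c : ℤ → ℤ → ℤ → ℤ) (l l' : ℕ) (k : ℤ) :
    algebraMap R (MonoidAlgebra R G) x * altTerm b a y x c (l, l', k) =
      altTerm a b x y (fun k l l' => c (-k) l' (l - 1)) (l' + 1, l, -k) := by
  simp only [altTerm, mul_smul_comm, coe_algebraMap, comp_apply, Algebra.algebraMap_self,
    RingHom.id_apply, single_mul_single, one_mul, neg_neg, altProdInt_neg, Nat.cast_succ,
    add_sub_cancel_right, pow_succ]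
  ring_nf

theorem finsum_of_mul_altTerm (ha : a * a = 1) (c : ℤ → ℤ → ℤ → ℤ) :
    ∑ᶠ p, of R G a * altTerm b a y x c p =
      ∑ᶠ p, altTerm a b x y (fun k l l' => c (k - 1) l' l) p := by
  let e : ℕ × ℕ × ℤ ≃ ℕ × ℕ × ℤ :=
    { toFun := fun (l, l', k) => (l', l, k + 1)
      invFun := fun (l, l', k) => (l', l, k - 1)
      left_inv := fun _ => by simp
      right_inv := fun _ => by simp }
  rw [← finsum_comp_equiv e (f := altTerm a b x y _)]
  exact finsum_congr fun ⟨l, l', k⟩ => of_mul_altTerm ha c l l' k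

theorem finsum_algebraMap_mul_altTerm {c : ℤ → ℤ → ℤ → ℤ} (hc : ∀ k l, c k l (-1) = 0) :
    ∑ᶠ p, algebraMap R (MonoidAlgebra R G) x * altTerm b a y x c p =
      ∑ᶠ p, altTerm a b x y (fun k l l' => c (-k) l' (l - 1)) p := by
  let e : ℕ × ℕ × ℤ → ℕ × ℕ × ℤ := fun (l, l', k) => (l' + 1, l, -k)
  have he : Injective e := by
    rintro ⟨l₁, l₁', k₁⟩ ⟨l₂, l₂', k₂⟩ h
    simp only [e, Prod.mk.injEq, add_left_inj, neg_inj] at h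
    simp [h]
  have hsupp : support (altTerm a b x y (fun k l l' => c (-k) l' (l - 1))) ⊆ Set.range e := by
    rintro ⟨_ | l, l', k⟩ h
    · simp [altTerm, hc] at h
    · exact ⟨(l', l, -k), by simp [e]⟩
  rw [← Set.indicator_eq_self.2 hsupp, ← finsum_mem_def, finsum_mem_range he]
  exact finsum_congr fun ⟨l, l', k⟩ => algebraMap_mul_altTerm c l l' k

theorem hasFiniteSupport_altTerm_alternatingAlpha (m : ℕ) :
    HasFiniteSupport (altTerm a b x y (alternatingAlpha m)) :=
  hasFiniteSupport_altTerm m fun _ _ _ h => by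
    have := bounds_of_alternatingAlpha_ne_zero h
    omega

theorem altProd_of_add_algebraMap_eq_finsum_altTerm (ha : a * a = 1) (hb : b * b = 1)
    (x y : R) (m : ℕ) :
    altProd (of R G a + algebraMap R (MonoidAlgebra R G) x)
        (of R G b + algebraMap R (MonoidAlgebra R G) y) m =
      ∑ᶠ p, altTerm a b x y (alternatingAlpha m) p := by
  induction m generalizing a b x y with
  | zero =>
    rw [finsum_eq_single _ (0, 0, 0)]
    · simp [altProd, altTerm, alternatingAlpha, altProdInt, one_def]
    · rintro ⟨l, l', k⟩ h
      simp only [ne_eq, Prod.mk.injEq, not_and] at h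
      rw [altTerm, alternatingAlpha, if_neg (by omega), zero_smul]
  | succ n ih =>
    have hα : ∀ k l, alternatingAlpha n k l (-1) = 0 := fun k l => by
      by_contra h
      have := bounds_of_alternatingAlpha_ne_zero h
      omega
    have hfin₁ : HasFiniteSupport
        (altTerm a b x y fun k l l' => alternatingAlpha n (k - 1) l' l) :=
      hasFiniteSupport_altTerm (n + 1) fun _ _ _ h => by
        have := bounds_of_alternatingAlpha_ne_zero h
        omega
    have hfin₂ : HasFiniteSupport
        (altTerm a b x y fun k l l' => alternatingAlpha n (-k) l' (l - 1)) :=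
      hasFiniteSupport_altTerm (n + 1) fun _ _ _ h => by
        have := bounds_of_alternatingAlpha_ne_zero h
        omega
    calc _ = (of R G a + algebraMap R (MonoidAlgebra R G) x) *
          ∑ᶠ p, altTerm b a y x (alternatingAlpha n) p := by rw [altProd, ih hb ha]
      _ = ∑ᶠ p, of R G a * altTerm b a y x (alternatingAlpha n) p +
          ∑ᶠ p, algebraMap R (MonoidAlgebra R G) x * altTerm b a y x (alternatingAlpha n) p := by
        rw [add_mul, mul_finsum' _ _ (hasFiniteSupport_altTerm_alternatingAlpha n),
          mul_finsum' _ _ (hasFiniteSupport_altTerm_alternatingAlpha n)]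
      _ = ∑ᶠ p, altTerm a b x y (fun k l l' => alternatingAlpha n (k - 1) l' l) p +
          ∑ᶠ p, altTerm a b x y (fun k l l' => alternatingAlpha n (-k) l' (l - 1)) p := by
        rw [finsum_of_mul_altTerm ha, finsum_algebraMap_mul_altTerm hα]
      _ = _ := by
        rw [← finsum_add_distrib hfin₁ hfin₂]
        refine finsum_congr fun ⟨l, l', k⟩ => ?_
        rw [altTerm, altTerm, altTerm, alternatingAlpha_succ (by positivity) (by positivity),
          add_smul]

theorem altProd_of_add_algebraMap (ha : a * a = 1) (hb : b * b = 1) (x y : R) (m : ℕ) :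
    altProd (of R G a + algebraMap R (MonoidAlgebra R G) x)
        (of R G b + algebraMap R (MonoidAlgebra R G) y) m =
      ∑ᶠ (l : ℕ) (l' : ℕ), algebraMap R (MonoidAlgebra R G) (x ^ l * y ^ l') *
        ∑ᶠ k : ℤ, alternatingAlpha m k l l' • of R G (altProdInt a b k) := by
  rw [altProd_of_add_algebraMap_eq_finsum_altTerm ha hb,
    finsum_curry₃ _ (hasFiniteSupport_altTerm_alternatingAlpha m)]
  refine finsum_congr fun l => finsum_congr fun l' => ?_
  have hfin :
      HasFiniteSupport fun k : ℤ => alternatingAlpha m k l l' • of R G (altProdInt a b k) :=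
    (Set.finite_Icc (-m : ℤ) m).subset fun k h => by
      have := bounds_of_alternatingAlpha_ne_zero (left_ne_zero_of_smul h)
      exact ⟨this.1, this.2.1⟩
  rw [mul_finsum' _ _ hfin]
  refine finsum_congr fun k => ?_
  rw [altTerm, mul_smul_comm, of_apply, coe_algebraMap, comp_apply, Algebra.algebraMap_self,
    RingHom.id_apply, single_mul_single, one_mul, mul_one]

end GroupAlgebra

theorem InfDihedral.of_mul_self (i : Bool) :
    (PresentedGroup.of i : InfDihedral) * PresentedGroup.of i = 1 := by
  rw [← pow_two]
  exact (map_pow (PresentedGroup.mk _) _ 2).symm.trans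
    (PresentedGroup.one_of_mem (by cases i <;> simp))

/-- In the group algebra of the infinite dihedral group over `ℤ[x,y]`,
`⟨u + x, v + y⟩_m = Σ_{l,l'≥0} x^l y^{l'} · Σ_{k ∈ ℤ} α^{(m)}_{k,l,l'} ⟨u,v⟩_k`. -/
theorem altProd_expansion_infinite_dihedral (m : ℕ) :
    altProd
      (MonoidAlgebra.of (MvPolynomial (Fin 2) ℤ) InfDihedral dihU +
        algebraMap (MvPolynomial (Fin 2) ℤ) InfDihedralAlgebra (MvPolynomial.X 0))
      (MonoidAlgebra.of (MvPolynomial (Fin 2) ℤ) InfDihedral dihV +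
        algebraMap (MvPolynomial (Fin 2) ℤ) InfDihedralAlgebra (MvPolynomial.X 1)) m =
    ∑ᶠ (l : ℕ) (l' : ℕ),
      algebraMap (MvPolynomial (Fin 2) ℤ) InfDihedralAlgebra
          (MvPolynomial.X 0 ^ l * MvPolynomial.X 1 ^ l') *
        ∑ᶠ (k : ℤ), alternatingAlpha m k l l' •
          MonoidAlgebra.of (MvPolynomial (Fin 2) ℤ) InfDihedral (altProdInt dihU dihV k) :=
  altProd_of_add_algebraMap (InfDihedral.of_mul_self false) (InfDihedral.of_mul_self true) _ _ m
end

section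
/- For all m, l, l' ∈ ℤ_{≥0} and k ∈ ℤ: if α^{(m)}_{k,l,l'} ≠ 0 then |k| ≤ m − l − l', k ≡ m − l − l' (mod 2), l ≤ ⌊(m+1)/2⌋ and l' ≤ ⌊m/2⌋. -/
/-- If `α^{(m)}_{k,l,l'} ≠ 0` then `|k| ≤ m − l − l'`, `k ≡ m − l − l' (mod 2)`,
`l ≤ ⌊(m+1)/2⌋` and `l' ≤ ⌊m/2⌋`. -/
theorem alternatingAlpha_support (m l l' : ℕ) (k : ℤ)
    (h : alternatingAlpha m k l l' ≠ 0) :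
    |k| ≤ (m : ℤ) - l - l' ∧
    k % 2 = ((m : ℤ) - l - l') % 2 ∧
    l ≤ (m + 1) / 2 ∧ l' ≤ m / 2 := by
  induction m generalizing k l l' with
  | zero =>
    rw [alternatingAlpha] at h
    split at h
    next hc =>
      obtain ⟨hk, hl, hl'⟩ := hc
      refine ⟨abs_le.mpr ?_, ?_, ?_, ?_⟩ <;> omega
    next => simp at h
  | succ m ih =>
    have hnn : ¬((l : ℤ) < 0 ∨ (l' : ℤ) < 0) := by omega
    rw [alternatingAlpha, if_neg hnn] at h
    have hor : alternatingAlpha m (k - 1) l' l ≠ 0 ∨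
        alternatingAlpha m (-k) l' ((l : ℤ) - 1) ≠ 0 := by
      by_contra hc
      push_neg at hc
      rw [hc.1, hc.2] at h
      simp at h
    rcases hor with h1 | h2
    · obtain ⟨a1, a2, a3, a4⟩ := ih l' l (k - 1) h1
      have a1' := abs_le.mp a1
      refine ⟨abs_le.mpr ?_, ?_, ?_, ?_⟩ <;> omega
    · rcases Nat.eq_zero_or_pos l with hl0 | hl0
      · subst hl0
        exfalso
        apply h2
        cases m with
        | zero =>
          rw [alternatingAlpha, if_neg]
          push_neg
          intro _ _
          omega
        | succ n =>
          rw [alternatingAlpha, if_pos]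
          right
          omega
      · obtain ⟨n, rfl⟩ := Nat.exists_eq_succ_of_ne_zero (by omega : l ≠ 0)
        have hcast : ((n + 1 : ℕ) : ℤ) - 1 = (n : ℤ) := by push_cast; ring
        rw [hcast] at h2
        obtain ⟨a1, a2, a3, a4⟩ := ih l' n (-k) h2
        have a1' := abs_le.mp a1
        refine ⟨abs_le.mpr ?_, ?_, ?_, ?_⟩ <;> omega
end

section
/- In the ring of formal power series in t, u, v over the Laurent polynomial ring ℤ[s,s^{−1}], let C := Σ_{m,l,l' ≥ 0} Σ_{k ∈ ℤ} α^{(m)}_{k,l,l'} t^m u^l v^{l'} s^k (for each (m,l,l') the inner sum over k is finite). Then C · (1 − t²(s² + s^{−2} + 2uv) + t⁴(u²−1)(v²−1)) = 1 + t(u+s) + t²(vs + us^{−1} − s^{−2} − uv) + t³(1−u²)(v − s^{−1}). -/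
/-- The generating function `C(t,u,v,s) = Σ_{m,l,l'≥0} Σ_{k∈ℤ} α^{(m)}_{k,l,l'} t^m u^l v^{l'} s^k`
as a formal power series in `t = X 0`, `u = X 1`, `v = X 2` over `ℤ[s,s⁻¹]`. -/
noncomputable def alphaGenFun : MvPowerSeries (Fin 3) (LaurentPolynomial ℤ) :=
  fun d => ∑ᶠ k : ℤ,
    alternatingAlpha (d 0) k ((d 1 : ℤ)) ((d 2 : ℤ)) • LaurentPolynomial.T k

/-- The constant power series with value `s^k`. -/
noncomputable def sPow (k : ℤ) : MvPowerSeries (Fin 3) (LaurentPolynomial ℤ) :=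
  MvPowerSeries.C (σ := Fin 3) (R := LaurentPolynomial ℤ) (LaurentPolynomial.T k)

open Function LaurentPolynomial

theorem LaurentPolynomial.coeff_finsum_smul_T {R : Type*} [Semiring R] {c : ℤ → R}
    (hc : (support c).Finite) (n : ℤ) : (∑ᶠ k, c k • T k : R[T;T⁻¹]).coeff n = c n := by
  classical
  rw [finsum_eq_sum_of_support_subset _ (s := hc.toFinset)
      (by simpa using support_smul_subset_left c _), AddMonoidAlgebra.coeff_sum,
    Finsupp.finsetSum_apply, Finset.sum_eq_single n]
  · simp
  · intro k _ hk
    simp [hk]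
  · intro hn
    simpa using hn

namespace MvPowerSeries

variable {σ R : Type*} [CommSemiring R]

-- Indexing by integer exponent vectors turns multiplication by a monomial into a shift.
def ofIntCoeff (G : (σ → ℤ) → R) : MvPowerSeries σ R := fun d => G fun i => d i

theorem coeff_ofIntCoeff (G : (σ → ℤ) → R) (d : σ →₀ ℕ) :
    coeff d (ofIntCoeff G) = G fun i => d i := rfl

theorem map_ofIntCoeff {S : Type*} [CommSemiring S] (f : R →+* S) (G : (σ → ℤ) → R) :
    map f (ofIntCoeff G) = ofIntCoeff (f ∘ G) := rfl

theorem coeff_monomial_mul_ofIntCoeff {G : (σ → ℤ) → R} (hG : ∀ z i, z i < 0 → G z = 0)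
    (d n : σ →₀ ℕ) (r : R) :
    coeff d (monomial n r * ofIntCoeff G) = r * G fun i => d i - n i := by
  classical
  rw [coeff_monomial_mul]
  split_ifs with h
  · rw [coeff_ofIntCoeff]
    congr 2
    funext i
    simp [Nat.cast_sub (h i)]
  · obtain ⟨i, hi⟩ : ∃ i, d i < n i := by simpa [Finsupp.le_def] using h
    rw [hG _ i (show (d i : ℤ) - n i < 0 by omega), mul_zero]

open Classical in
theorem ofIntCoeff_eq_one_add_X_mul {G Q S : (σ → ℤ) → R}
    (hQ : ∀ z i, z i < 0 → Q z = 0) (hS : ∀ z i, z i < 0 → S z = 0) (i j : σ) (r : R)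
    (h : ∀ z, G z = (if z = 0 then 1 else 0) + r * Q (z - Pi.single i 1) +
      S (z - Pi.single i 1 - Pi.single j 1)) :
    ofIntCoeff G = 1 + X i * (C r * ofIntCoeff Q + X j * ofIntCoeff S) := by
  have hXC : X i * C r = monomial (Finsupp.single i 1) r := by
    rw [X, ← monomial_zero_eq_C_apply, monomial_mul_monomial, add_zero, one_mul]
  have hXX : X i * X j = monomial (Finsupp.single i 1 + Finsupp.single j 1) (1 : R) := by
    rw [X, X, monomial_mul_monomial, one_mul]
  ext d
  rw [mul_add, ← mul_assoc, ← mul_assoc, hXC, hXX, map_add, map_add,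
    coeff_monomial_mul_ofIntCoeff hQ, coeff_monomial_mul_ofIntCoeff hS, coeff_one,
    coeff_ofIntCoeff, h, one_mul, add_assoc]
  have hQd : (fun k => (d k : ℤ)) - (Pi.single i 1 : σ → ℤ) =
      fun k => (d k : ℤ) - (Finsupp.single i 1 k : ℕ) := by
    ext k
    simp [Finsupp.single_apply, Pi.single_apply, eq_comm]
  have hSd : (fun k => (d k : ℤ)) - (Pi.single i 1 : σ → ℤ) - Pi.single j 1 =
      fun k => (d k : ℤ) - ((Finsupp.single i 1 + Finsupp.single j 1 : σ →₀ ℕ) k : ℕ) := by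
    ext k
    simp [Finsupp.single_apply, Pi.single_apply, eq_comm, sub_sub]
  rw [hSd, hQd]
  congr 1
  simp [funext_iff, Finsupp.ext_iff]

end MvPowerSeries

open MvPowerSeries

theorem alternatingAlpha_eq_zero_of_neg :
    ∀ (m : ℕ) {k l l' : ℤ}, l < 0 ∨ l' < 0 → alternatingAlpha m k l l' = 0
  | 0, _, _, _, h => by
    rw [alternatingAlpha, if_neg]
    omega
  | m + 1, _, _, _, h => by rw [alternatingAlpha, if_pos h]

theorem alternatingAlpha_eq_zero_of_lt_abs :
    ∀ (m : ℕ) {k : ℤ} (l l' : ℤ), (m : ℤ) < |k| → alternatingAlpha m k l l' = 0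
  | 0, k, l, l', h => by
    rw [alternatingAlpha, if_neg]
    rintro ⟨rfl, -, -⟩
    simp at h
  | m + 1, k, l, l', h => by
    rw [lt_abs, Nat.cast_succ] at h
    rw [alternatingAlpha, alternatingAlpha_eq_zero_of_lt_abs m _ _ (by rw [lt_abs]; omega),
      alternatingAlpha_eq_zero_of_lt_abs m _ _ (by rw [lt_abs]; omega), add_zero, ite_self]

-- Extended by zero to `m < 0`, so that `alphaExt_rec` holds on all of `ℤ⁴`, the initial
-- condition included.
def alphaExt (m k l l' : ℤ) : ℤ := if 0 ≤ m then alternatingAlpha m.toNat k l l' else 0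

theorem alphaExt_natCast (n : ℕ) (k l l' : ℤ) :
    alphaExt n k l l' = alternatingAlpha n k l l' := by
  simp [alphaExt]

theorem alphaExt_eq_zero {m k l l' : ℤ} (h : m < 0 ∨ l < 0 ∨ l' < 0) :
    alphaExt m k l l' = 0 := by
  unfold alphaExt
  split_ifs
  · exact alternatingAlpha_eq_zero_of_neg _ (by omega)
  · rfl

theorem alphaExt_eq_zero_of_lt_abs {m k : ℤ} (l l' : ℤ) (h : m < |k|) :
    alphaExt m k l l' = 0 := by
  unfold alphaExt
  split_ifs with hm
  · exact alternatingAlpha_eq_zero_of_lt_abs _ _ _ (by rwa [Int.toNat_of_nonneg hm])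
  · rfl

theorem support_alphaExt_finite (m l l' : ℤ) : (support fun k => alphaExt m k l l').Finite :=
  (Set.finite_Icc (-m) m).subset fun _ hk =>
    abs_le.mp (not_lt.mp fun h => hk (alphaExt_eq_zero_of_lt_abs l l' h))

theorem alphaExt_rec (m k l l' : ℤ) :
    alphaExt m k l l' = (if m = 0 ∧ k = 0 ∧ l = 0 ∧ l' = 0 then 1 else 0) +
      alphaExt (m - 1) (k - 1) l' l + alphaExt (m - 1) (-k) l' (l - 1) := by
  rcases lt_or_ge m 0 with hm | hm
  · rw [alphaExt_eq_zero (Or.inl hm), alphaExt_eq_zero (Or.inl (by omega)),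
      alphaExt_eq_zero (Or.inl (by omega)), if_neg (by omega)]
    rfl
  lift m to ℕ using hm
  cases m with
  | zero =>
    rw [alphaExt_natCast, Nat.cast_zero, alphaExt_eq_zero (Or.inl (by omega)),
      alphaExt_eq_zero (Or.inl (by omega)), alternatingAlpha]
    simp
  | succ n =>
    rw [alphaExt_natCast, Nat.cast_succ, add_sub_cancel_right, alphaExt_natCast,
      alphaExt_natCast, if_neg (by omega), zero_add, alternatingAlpha]
    split_ifs
    · rw [alternatingAlpha_eq_zero_of_neg _ (by omega),
        alternatingAlpha_eq_zero_of_neg _ (by omega), add_zero]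
    · rfl

noncomputable def alphaPoly (m l l' : ℤ) : ℤ[T;T⁻¹] := ∑ᶠ k, alphaExt m k l l' • T k

theorem coeff_alphaPoly (m l l' k : ℤ) : (alphaPoly m l l').coeff k = alphaExt m k l l' :=
  coeff_finsum_smul_T (support_alphaExt_finite m l l') k

theorem alphaPoly_eq_zero {m l l' : ℤ} (h : m < 0 ∨ l < 0 ∨ l' < 0) : alphaPoly m l l' = 0 := by
  ext k
  rw [coeff_alphaPoly, alphaExt_eq_zero h]
  rfl

theorem alphaPoly_eq_zero_of_neg_coord {z : Fin 3 → ℤ} {i : Fin 3} (hi : z i < 0) :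
    alphaPoly (z 0) (z 1) (z 2) = 0 ∧ alphaPoly (z 0) (z 2) (z 1) = 0 := by
  constructor <;> apply alphaPoly_eq_zero <;> fin_cases i <;> simp_all

theorem alphaPoly_rec (m l l' : ℤ) :
    alphaPoly m l l' = (if m = 0 ∧ l = 0 ∧ l' = 0 then 1 else 0) +
      T 1 * alphaPoly (m - 1) l' l + invert (alphaPoly (m - 1) l' (l - 1)) := by
  ext k
  simp only [AddMonoidAlgebra.coeff_add, Finsupp.add_apply, coeff_alphaPoly, T,
    AddMonoidAlgebra.coeff_single_mul_apply, invert_apply, one_mul]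
  rw [alphaExt_rec, neg_add_eq_sub]
  congr 2
  split_ifs <;> simp_all [← T_zero, eq_comm]

noncomputable def alphaSeries : MvPowerSeries (Fin 3) ℤ[T;T⁻¹] :=
  ofIntCoeff fun z => alphaPoly (z 0) (z 1) (z 2)

noncomputable def alphaSeriesSwap : MvPowerSeries (Fin 3) ℤ[T;T⁻¹] :=
  ofIntCoeff fun z => alphaPoly (z 0) (z 2) (z 1)

theorem alphaGenFun_eq_alphaSeries : alphaGenFun = alphaSeries := by
  ext d : 1
  simp only [alphaSeries, coeff_ofIntCoeff, alphaPoly, alphaExt_natCast]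
  rfl

theorem alphaSeries_eq : alphaSeries =
    1 + X 0 * (sPow 1 * alphaSeriesSwap + X 1 * map invert.toRingHom alphaSeriesSwap) := by
  rw [alphaSeries, alphaSeriesSwap, map_ofIntCoeff, sPow]
  refine ofIntCoeff_eq_one_add_X_mul (fun z i hi => (alphaPoly_eq_zero_of_neg_coord hi).2)
    (fun z i hi => by simp [(alphaPoly_eq_zero_of_neg_coord hi).2]) 0 1 _ fun z => ?_
  rw [alphaPoly_rec]
  simp [funext_iff, Fin.forall_fin_succ]

theorem alphaSeriesSwap_eq : alphaSeriesSwap =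
    1 + X 0 * (sPow 1 * alphaSeries + X 2 * map invert.toRingHom alphaSeries) := by
  rw [alphaSeries, alphaSeriesSwap, map_ofIntCoeff, sPow]
  refine ofIntCoeff_eq_one_add_X_mul (fun z i hi => (alphaPoly_eq_zero_of_neg_coord hi).1)
    (fun z i hi => by simp [(alphaPoly_eq_zero_of_neg_coord hi).1]) 0 2 _ fun z => ?_
  rw [alphaPoly_rec]
  simp [funext_iff, Fin.forall_fin_succ, and_comm]

theorem sPow_add (m n : ℤ) : sPow (m + n) = sPow m * sPow n := by
  rw [sPow, sPow, sPow, T_add, map_mul]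

theorem map_invert_sPow (k : ℤ) : map invert.toRingHom (sPow k) = sPow (-k) := by
  rw [sPow, sPow, map_C]
  simp

theorem map_invert_map_invert {σ : Type*} (φ : MvPowerSeries σ ℤ[T;T⁻¹]) :
    map invert.toRingHom (map invert.toRingHom φ) = φ := by
  ext d : 1
  simp [involutive_invert _]

theorem map_invert_one_add_X_mul (i j : Fin 3) (P Q : MvPowerSeries (Fin 3) ℤ[T;T⁻¹]) :
    map invert.toRingHom (1 + X i * (sPow 1 * P + X j * map invert.toRingHom Q)) =
      1 + X i * (sPow (-1) * map invert.toRingHom P + X j * Q) := by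
  simp only [map_add, map_mul, map_one, map_X, map_invert_sPow, map_invert_map_invert]

open MvPowerSeries in
/-- The functional equation for the generating function of the `α^{(m)}_{k,l,l'}`:
`C·(1 − t²(s² + s⁻² + 2uv) + t⁴(u²−1)(v²−1))
  = 1 + t(u+s) + t²(vs + us⁻¹ − s⁻² − uv) + t³(1−u²)(v − s⁻¹)`. -/
theorem alphaGenFun_eq :
    alphaGenFun *
      (1 - (X 0 : MvPowerSeries (Fin 3) (LaurentPolynomial ℤ)) ^ 2 *
          (sPow 2 + sPow (-2) + 2 * X 1 * X 2) +
        (X 0) ^ 4 * ((X 1) ^ 2 - 1) * ((X 2) ^ 2 - 1)) =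
    1 + (X 0 : MvPowerSeries (Fin 3) (LaurentPolynomial ℤ)) * (X 1 + sPow 1) +
      (X 0) ^ 2 * (X 2 * sPow 1 + X 1 * sPow (-1) - sPow (-2) - X 1 * X 2) +
      (X 0) ^ 3 * (1 - (X 1) ^ 2) * (X 2 - sPow (-1)) := by
  have eA := alphaSeries_eq
  have eA' := alphaSeriesSwap_eq
  have eB := congrArg (map invert.toRingHom) eA
  have eB' := congrArg (map invert.toRingHom) eA'
  rw [map_invert_one_add_X_mul] at eB eB'
  have hs : sPow 1 * sPow (-1) = 1 := by rw [← sPow_add, add_neg_cancel, sPow, T_zero, map_one]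
  have hs2 : sPow 2 = sPow 1 ^ 2 := by rw [sq, ← sPow_add]; rfl
  have hs2' : sPow (-2) = sPow (-1) ^ 2 := by rw [sq, ← sPow_add]; rfl
  rw [alphaGenFun_eq_alphaSeries]
  -- Cramer's rule: the coefficients of `eA`, `eB`, `eA'`, `eB'` are the first-column cofactors.
  linear_combination (1 - X 0 ^ 2 * X 1 * X 2 - X 0 ^ 2 * sPow (-1) ^ 2) * eA
    + (X 0 ^ 2 * sPow (-1) * X 1 + X 0 ^ 2 * sPow 1 * X 2) * eB
    + (X 0 * sPow 1 + X 0 ^ 3 * sPow (-1) * X 1 ^ 2 - X 0 ^ 3 * sPow 1 * sPow (-1) ^ 2) * eA'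
    + (X 0 * X 1 - X 0 ^ 3 * X 1 ^ 2 * X 2 + X 0 ^ 3 * sPow 1 * sPow (-1) * X 2) * eB'
    + (-X 0 ^ 4 * alphaSeries * (sPow 1 * sPow (-1) + 1 - X 1 ^ 2 - X 2 ^ 2)
      + X 0 ^ 3 * (X 2 - sPow (-1))) * hs
    - alphaSeries * X 0 ^ 2 * hs2 + (1 - alphaSeries) * X 0 ^ 2 * hs2'
end

section
/- Set α^{(m)}_{k,L} := Σ_{l,l' ≥ 0, l+l' = L} α^{(m)}_{k,l,l'}. Then for all m ≥ 0, L ≥ 0 and 0 ≤ k ≤ m: if L is odd, α^{(m)}_{−k,L} = α^{(m)}_{k,L}; if L is even, (m+k) · α^{(m)}_{−k,L} = (m−k) · α^{(m)}_{k,L}. -/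
/-- `α^{(m)}_{k,L} = Σ_{l+l' = L} α^{(m)}_{k,l,l'}`. -/
def alternatingAlphaL (m : ℕ) (k : ℤ) (L : ℕ) : ℤ :=
  ∑ l ∈ Finset.range (L + 1), alternatingAlpha m k (l : ℤ) ((L - l : ℕ) : ℤ)

/-!
Reading the recursion backwards, `α^{(m)}_{k,L}` counts the words of length `m` in a shift
`k ↦ k + 1` and a flip `k ↦ -k`, containing `L` flips, that take `0` to `k`. The flips cut such a
word into `L + 1` blocks of shifts, which enter the final value with alternating signs, the last
one positively. So `k = a - b` and `m - L = a + b`, where `a` shifts are spread over `⌊L/2⌋ + 1`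
blocks and `b` over `⌈L/2⌉` blocks, and `α^{(m)}_{k,L}` is a product of two multichoose numbers.
Replacing `k` by `-k` swaps `a` and `b`: for odd `L` the two block numbers agree, and for even
`L = 2t` the identity `(a + t) * multichoose t a = t * multichoose (t + 1) a` balances both sides.
-/

open Finset

theorem Nat.add_mul_multichoose (n p : ℕ) :
    (n + p) * p.multichoose n = p * (p + 1).multichoose n := by
  rcases p with _ | q
  · cases n <;> simp
  · rw [Nat.multichoose_eq, Nat.multichoose_eq, show q + 1 + n - 1 = n + q by omega,
      show q + 1 + 1 + n - 1 = n + q + 1 by omega, ← add_assoc, mul_comm,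
      Nat.choose_mul_succ_eq, show n + q + 1 - n = q + 1 by omega, mul_comm]

def intMultichoose (p : ℕ) (n : ℤ) : ℤ :=
  if 0 ≤ n then p.multichoose n.toNat else 0

lemma intMultichoose_of_neg {p : ℕ} {n : ℤ} (hn : n < 0) : intMultichoose p n = 0 :=
  if_neg (by omega)

lemma intMultichoose_natCast (p n : ℕ) : intMultichoose p n = p.multichoose n := by
  simp [intMultichoose]

lemma intMultichoose_zero (n : ℤ) : intMultichoose 0 n = if n = 0 then 1 else 0 := by
  rcases lt_or_ge n 0 with hn | hn
  · rw [intMultichoose_of_neg hn, if_neg hn.ne]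
  · lift n to ℕ using hn
    rcases n with _ | n
    · simp [intMultichoose]
    · simp [intMultichoose]
      omega

lemma intMultichoose_one (n : ℤ) : intMultichoose 1 n = if 0 ≤ n then 1 else 0 := by
  simp [intMultichoose]

lemma intMultichoose_succ (p : ℕ) (n : ℤ) :
    intMultichoose (p + 1) n = intMultichoose (p + 1) (n - 1) + intMultichoose p n := by
  rcases lt_or_ge n 0 with hn | hn
  · simp [intMultichoose_of_neg, hn, show n - 1 < 0 by omega]
  · lift n to ℕ using hn
    rcases n with _ | n
    · simp [intMultichoose]
    · rw [show ((n + 1 : ℕ) : ℤ) - 1 = n by push_cast; ring]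
      simp only [intMultichoose_natCast, Nat.multichoose_succ_succ]
      push_cast
      ring

lemma add_mul_intMultichoose (p : ℕ) (n : ℤ) :
    (n + p) * intMultichoose p n = p * intMultichoose (p + 1) n := by
  rcases lt_or_ge n 0 with hn | hn
  · simp [intMultichoose_of_neg hn]
  · lift n to ℕ using hn
    simp only [intMultichoose_natCast]
    exact_mod_cast Nat.add_mul_multichoose n p

def shiftBlockCount (L : ℕ) (a b : ℤ) : ℤ :=
  intMultichoose (L / 2 + 1) a * intMultichoose ((L + 1) / 2) b

lemma shiftBlockCount_eq_zero {L : ℕ} {a b : ℤ} (h : a < 0 ∨ b < 0) :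
    shiftBlockCount L a b = 0 := by
  rcases h with h | h <;> simp [shiftBlockCount, intMultichoose_of_neg h]

lemma shiftBlockCount_zero_sub_one {a b : ℤ} (h : 0 < a + b) :
    shiftBlockCount 0 (a - 1) b = shiftBlockCount 0 a b := by
  simp only [shiftBlockCount, Nat.zero_div, zero_add, Nat.reduceDiv, intMultichoose_one,
    intMultichoose_zero]
  split_ifs <;> first | rfl | omega

lemma shiftBlockCount_succ (L : ℕ) (a b : ℤ) :
    shiftBlockCount (L + 1) a b = shiftBlockCount (L + 1) (a - 1) b + shiftBlockCount L b a := by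
  simp only [shiftBlockCount, show (L + 1 + 1) / 2 = L / 2 + 1 by omega]
  rw [intMultichoose_succ]
  ring

lemma shiftBlockCount_swap_of_odd (t : ℕ) (a b : ℤ) :
    shiftBlockCount (2 * t + 1) b a = shiftBlockCount (2 * t + 1) a b := by
  simp only [shiftBlockCount, show (2 * t + 1) / 2 = t by omega,
    show (2 * t + 1 + 1) / 2 = t + 1 by omega]
  ring

lemma shiftBlockCount_swap_of_even (t : ℕ) (a b : ℤ) :
    (a + t) * shiftBlockCount (2 * t) b a = (b + t) * shiftBlockCount (2 * t) a b := by
  simp only [shiftBlockCount, show 2 * t / 2 = t by omega, show (2 * t + 1) / 2 = t by omega]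
  linear_combination intMultichoose (t + 1) b * add_mul_intMultichoose t a -
    intMultichoose (t + 1) a * add_mul_intMultichoose t b

def alphaLClosedForm (m : ℕ) (k : ℤ) (L : ℕ) : ℤ :=
  if Even ((m : ℤ) + L + k) then shiftBlockCount L ((m - L + k) / 2) ((m - L - k) / 2) else 0

lemma alphaLClosedForm_of_eq {m L : ℕ} {k a b : ℤ} (ha : (m : ℤ) - L + k = 2 * a)
    (hb : (m : ℤ) - L - k = 2 * b) : alphaLClosedForm m k L = shiftBlockCount L a b := by
  rw [alphaLClosedForm, if_pos (Int.even_iff.2 (by omega)),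
    show ((m : ℤ) - L + k) / 2 = a by omega, show ((m : ℤ) - L - k) / 2 = b by omega]

lemma alphaLClosedForm_of_not_even {m L : ℕ} {k : ℤ} (h : ¬Even ((m : ℤ) + L + k)) :
    alphaLClosedForm m k L = 0 :=
  if_neg h

lemma alphaLClosedForm_zero (k : ℤ) (L : ℕ) :
    alphaLClosedForm 0 k L = if k = 0 ∧ L = 0 then 1 else 0 := by
  by_cases h : k = 0 ∧ L = 0
  · obtain ⟨rfl, rfl⟩ := h
    rw [alphaLClosedForm_of_eq (a := 0) (b := 0) (by simp) (by simp)]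
    simp [shiftBlockCount, intMultichoose]
  rw [if_neg h]
  by_cases hp : Even (((0 : ℕ) : ℤ) + L + k)
  · rw [Int.even_iff] at hp
    rw [alphaLClosedForm_of_eq (a := (k - L) / 2) (b := (-k - L) / 2), shiftBlockCount_eq_zero]
    all_goals omega
  · exact alphaLClosedForm_of_not_even hp

lemma alphaLClosedForm_succ_zero (m : ℕ) (k : ℤ) :
    alphaLClosedForm (m + 1) k 0 = alphaLClosedForm m (k - 1) 0 := by
  by_cases hp : Even ((m : ℤ) + 1 + k)
  · rw [Int.even_iff] at hp
    rw [alphaLClosedForm_of_eq (a := (m + 1 + k) / 2) (b := (m + 1 - k) / 2),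
      alphaLClosedForm_of_eq (a := (m + 1 + k) / 2 - 1) (b := (m + 1 - k) / 2),
      shiftBlockCount_zero_sub_one]
    all_goals push_cast; omega
  · rw [Int.even_iff] at hp
    rw [alphaLClosedForm_of_not_even, alphaLClosedForm_of_not_even]
    all_goals rw [Int.even_iff]; push_cast; omega

lemma alphaLClosedForm_succ_succ (m : ℕ) (k : ℤ) (L : ℕ) :
    alphaLClosedForm (m + 1) k (L + 1) =
      alphaLClosedForm m (k - 1) (L + 1) + alphaLClosedForm m (-k) L := by
  by_cases hp : Even ((m : ℤ) + L + k)
  · rw [Int.even_iff] at hp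
    rw [alphaLClosedForm_of_eq (a := (m - L + k) / 2) (b := (m - L - k) / 2),
      alphaLClosedForm_of_eq (a := (m - L + k) / 2 - 1) (b := (m - L - k) / 2),
      alphaLClosedForm_of_eq (a := (m - L - k) / 2) (b := (m - L + k) / 2), shiftBlockCount_succ]
    all_goals push_cast; omega
  · rw [Int.even_iff] at hp
    rw [alphaLClosedForm_of_not_even, alphaLClosedForm_of_not_even, alphaLClosedForm_of_not_even,
      add_zero]
    all_goals rw [Int.even_iff]; push_cast; omega

lemma alphaLClosedForm_neg_of_odd (m : ℕ) (k : ℤ) {L : ℕ} (hL : Odd L) :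
    alphaLClosedForm m (-k) L = alphaLClosedForm m k L := by
  obtain ⟨t, rfl⟩ := hL
  by_cases hp : Even ((m : ℤ) + (2 * t + 1 : ℕ) + k)
  · rw [Int.even_iff] at hp
    set a := ((m : ℤ) - (2 * t + 1 : ℕ) + k) / 2
    set b := ((m : ℤ) - (2 * t + 1 : ℕ) - k) / 2
    rw [alphaLClosedForm_of_eq (a := b) (b := a), alphaLClosedForm_of_eq (a := a) (b := b),
      shiftBlockCount_swap_of_odd]
    all_goals omega
  · rw [Int.even_iff] at hp
    rw [alphaLClosedForm_of_not_even, alphaLClosedForm_of_not_even]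
    all_goals rw [Int.even_iff]; omega

lemma alphaLClosedForm_neg_of_even (m : ℕ) (k : ℤ) {L : ℕ} (hL : Even L) :
    (m + k) * alphaLClosedForm m (-k) L = (m - k) * alphaLClosedForm m k L := by
  obtain ⟨t, rfl⟩ : ∃ t, L = 2 * t := ⟨L / 2, by rw [Nat.even_iff] at hL; omega⟩
  by_cases hp : Even ((m : ℤ) + (2 * t : ℕ) + k)
  · rw [Int.even_iff] at hp
    set a := ((m : ℤ) - (2 * t : ℕ) + k) / 2
    set b := ((m : ℤ) - (2 * t : ℕ) - k) / 2
    have ha : (m : ℤ) + k = 2 * (a + t) := by omega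
    have hb : (m : ℤ) - k = 2 * (b + t) := by omega
    rw [ha, hb, alphaLClosedForm_of_eq (a := b) (b := a), alphaLClosedForm_of_eq (a := a) (b := b)]
    · linear_combination 2 * shiftBlockCount_swap_of_even t a b
    all_goals omega
  · rw [Int.even_iff] at hp
    rw [alphaLClosedForm_of_not_even, alphaLClosedForm_of_not_even, mul_zero, mul_zero]
    all_goals rw [Int.even_iff]; omega

lemma alternatingAlphaL_eq_sum_antidiagonal (m : ℕ) (k : ℤ) (L : ℕ) :
    alternatingAlphaL m k L = ∑ p ∈ antidiagonal L, alternatingAlpha m k p.1 p.2 :=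
  (Nat.sum_antidiagonal_eq_sum_range_succ (fun l l' ↦ alternatingAlpha m k l l') L).symm

lemma alternatingAlpha_succ_natCast (m : ℕ) (k : ℤ) (l l' : ℕ) :
    alternatingAlpha (m + 1) k l l' =
      alternatingAlpha m (k - 1) l' l + alternatingAlpha m (-k) l' (l - 1) := by
  rw [alternatingAlpha, if_neg (by omega)]

lemma alternatingAlpha_neg_one_right (m : ℕ) (k l : ℤ) : alternatingAlpha m k l (-1) = 0 := by
  cases m <;> simp [alternatingAlpha]

lemma alternatingAlphaL_zero (k : ℤ) (L : ℕ) :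
    alternatingAlphaL 0 k L = if k = 0 ∧ L = 0 then 1 else 0 := by
  rw [alternatingAlphaL_eq_sum_antidiagonal]
  rcases L with _ | L
  · rw [Nat.antidiagonal_zero, sum_singleton]
    simp [alternatingAlpha]
  · rw [if_neg (by omega)]
    refine sum_eq_zero fun p hp ↦ ?_
    rw [HasAntidiagonal.mem_antidiagonal] at hp
    rw [alternatingAlpha, if_neg (by omega)]

lemma alternatingAlphaL_succ_zero (m : ℕ) (k : ℤ) :
    alternatingAlphaL (m + 1) k 0 = alternatingAlphaL m (k - 1) 0 := by
  simp [alternatingAlphaL_eq_sum_antidiagonal, alternatingAlpha_succ_natCast,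
    alternatingAlpha_neg_one_right]

lemma alternatingAlphaL_succ_succ (m : ℕ) (k : ℤ) (L : ℕ) :
    alternatingAlphaL (m + 1) k (L + 1) =
      alternatingAlphaL m (k - 1) (L + 1) + alternatingAlphaL m (-k) L := by
  simp only [alternatingAlphaL_eq_sum_antidiagonal, alternatingAlpha_succ_natCast,
    sum_add_distrib]
  congr 1
  · exact Nat.sum_antidiagonal_swap (f := fun p ↦ alternatingAlpha m (k - 1) p.1 p.2)
  · rw [Nat.sum_antidiagonal_succ]
    simp only [Nat.cast_zero, zero_sub, alternatingAlpha_neg_one_right, Nat.cast_add_one,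
      add_sub_cancel_right, zero_add]
    exact Nat.sum_antidiagonal_swap (f := fun p ↦ alternatingAlpha m (-k) p.1 p.2)

theorem alternatingAlphaL_eq_alphaLClosedForm (m : ℕ) (k : ℤ) (L : ℕ) :
    alternatingAlphaL m k L = alphaLClosedForm m k L := by
  induction m generalizing k L with
  | zero => rw [alternatingAlphaL_zero, alphaLClosedForm_zero]
  | succ m ih =>
    cases L with
    | zero => rw [alternatingAlphaL_succ_zero, alphaLClosedForm_succ_zero, ih]
    | succ L => rw [alternatingAlphaL_succ_succ, alphaLClosedForm_succ_succ, ih, ih]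

theorem alternatingAlphaL_symmetry_general (m L k : ℕ) :
    (L % 2 = 1 → alternatingAlphaL m (-(k : ℤ)) L = alternatingAlphaL m (k : ℤ) L) ∧
    (L % 2 = 0 → ((m : ℤ) + k) * alternatingAlphaL m (-(k : ℤ)) L =
      ((m : ℤ) - k) * alternatingAlphaL m (k : ℤ) L) := by
  simp only [alternatingAlphaL_eq_alphaLClosedForm]
  exact ⟨fun hL ↦ alphaLClosedForm_neg_of_odd m k (Nat.odd_iff.2 hL),
    fun hL ↦ alphaLClosedForm_neg_of_even m k (Nat.even_iff.2 hL)⟩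

/-- For `0 ≤ k ≤ m`: if `L` is odd then `α^{(m)}_{−k,L} = α^{(m)}_{k,L}`, and if `L` is
even then `(m+k)·α^{(m)}_{−k,L} = (m−k)·α^{(m)}_{k,L}`. -/
theorem alternatingAlphaL_symmetry (m L k : ℕ) (hk : k ≤ m) :
    (L % 2 = 1 → alternatingAlphaL m (-(k : ℤ)) L = alternatingAlphaL m (k : ℤ) L) ∧
    (L % 2 = 0 → ((m : ℤ) + k) * alternatingAlphaL m (-(k : ℤ)) L =
      ((m : ℤ) - k) * alternatingAlphaL m (k : ℤ) L) :=
  alternatingAlphaL_symmetry_general m L k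
end
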